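/- Let f : ℝ₊ × X → X be a continuous semiflow on a metric space X, x ∈ X, and suppose C is a center of attraction of f(t,x). If for some q ∈ C and ε > 0 one has lim_{T→∞} (1/T) λ{t ∈ [0,T] : f(t,x) ∈ B_{3ε}(q)} = 0, then the closed set C \ B_{2ε}(q) is also a center of attraction of f(t,x). In particular, if C is minimal then every q ∈ C satisfies limsup_{T→∞} (1/T) λ{t ∈ [0,T] : f(t,x) ∈ U} > 0 for every neighborhood U of q. -/

import Mathlib

open MeasureTheory Filter Metric Set Topology
open scoped Classical

noncomputable section

/-- The set `S ⊆ ℝ` has density `α` in `[0,∞)`. -/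
def HasDens (S : Set ℝ) (α : ℝ) : Prop :=
  Filter.Tendsto (fun T : ℝ => (MeasureTheory.volume (S ∩ Set.Icc 0 T)).toReal / T)
    Filter.atTop (nhds α)

/-- `f` is a continuous semiflow on `X` (time in `[0,∞)`). -/
def IsSemiflow {X : Type*} [MetricSpace X] (f : ℝ → X → X) : Prop :=
  ContinuousOn (fun p : ℝ × X => f p.1 p.2) (Set.Ici 0 ×ˢ Set.univ) ∧
  (∀ x : X, f 0 x = x) ∧
  (∀ s t : ℝ, 0 ≤ s → 0 ≤ t → ∀ x : X, f s (f t x) = f (s + t) x)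

/-- `C` is a center of attraction of the motion `f (t, x)`. -/
def IsCtr {X : Type*} [MetricSpace X] (f : ℝ → X → X) (x : X) (C : Set X) : Prop :=
  IsClosed C ∧ ∀ ε > (0 : ℝ), HasDens {t : ℝ | 0 ≤ t ∧ f t x ∈ Metric.thickening ε C} 1

/-- `C` is the minimal center of attraction of the motion `f (t, x)`. -/
def IsMCA {X : Type*} [MetricSpace X] (f : ℝ → X → X) (x : X) (C : Set X) : Prop :=
  IsCtr f x C ∧ ∀ C' ⊆ C, IsCtr f x C' → C' = C

/-!
A point within `min δ ε` of `C` is either within `δ` of `C \ B_r(q)` or within `r + ε` of `q`.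
If the orbit visits `B_{r+ε}(q)` with density zero, the times of the first kind therefore have
density one, so `C \ B_r(q)` is again a center. For a minimal center, a neighbourhood of `q ∈ C`
visited with upper density zero would make `C` minus a small ball around `q` a smaller center.
-/

def densityRatio (S : Set ℝ) (T : ℝ) : ℝ := volume.real (S ∩ Icc 0 T) / T

lemma hasDens_iff {S : Set ℝ} {α : ℝ} :
    HasDens S α ↔ Tendsto (densityRatio S) atTop (𝓝 α) := Iff.rfl

section densityRatio

variable {S S' A B N : Set ℝ} {T : ℝ}

lemma volume_inter_Icc_ne_top : volume (S ∩ Icc 0 T) ≠ ⊤ :=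
  measure_ne_top_of_subset inter_subset_right measure_Icc_lt_top.ne

lemma densityRatio_of_nonpos (S : Set ℝ) (hT : T ≤ 0) : densityRatio S T = 0 := by
  have hvol : volume (S ∩ Icc 0 T) = 0 := by
    refine measure_mono_null inter_subset_right ?_
    rw [Real.volume_Icc, sub_zero, ENNReal.ofReal_eq_zero.mpr hT]
  simp [densityRatio, measureReal_def, hvol]

lemma densityRatio_nonneg (S : Set ℝ) (T : ℝ) : 0 ≤ densityRatio S T := by
  rcases le_or_gt T 0 with hT | hT
  · exact (densityRatio_of_nonpos S hT).ge
  · exact div_nonneg measureReal_nonneg hT.le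

lemma densityRatio_le_one (S : Set ℝ) (T : ℝ) : densityRatio S T ≤ 1 := by
  rcases le_or_gt T 0 with hT | hT
  · exact (densityRatio_of_nonpos S hT).trans_le zero_le_one
  · rw [densityRatio, div_le_one hT]
    calc volume.real (S ∩ Icc 0 T) ≤ volume.real (Icc 0 T) :=
          measureReal_mono inter_subset_right measure_Icc_lt_top.ne
      _ = T := by simp [hT.le]

lemma densityRatio_mono (h : S ⊆ S') (T : ℝ) : densityRatio S T ≤ densityRatio S' T := by
  rcases le_or_gt T 0 with hT | hT
  · simp [densityRatio_of_nonpos _ hT]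
  · exact div_le_div_of_nonneg_right
      (measureReal_mono (inter_subset_inter_left _ h) volume_inter_Icc_ne_top) hT.le

lemma densityRatio_le_add (h : B ⊆ A ∪ N) (T : ℝ) :
    densityRatio B T ≤ densityRatio A T + densityRatio N T := by
  rcases le_or_gt T 0 with hT | hT
  · simp [densityRatio_of_nonpos _ hT]
  rw [densityRatio, densityRatio, densityRatio, ← add_div]
  refine div_le_div_of_nonneg_right ?_ hT.le
  calc volume.real (B ∩ Icc 0 T) ≤ volume.real ((A ∩ Icc 0 T) ∪ (N ∩ Icc 0 T)) := by
        rw [← union_inter_distrib_right]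
        exact measureReal_mono (inter_subset_inter_left _ h) volume_inter_Icc_ne_top
    _ ≤ _ := measureReal_union_le _ _

lemma limsup_densityRatio_mono (h : S ⊆ S') :
    limsup (densityRatio S) atTop ≤ limsup (densityRatio S') atTop :=
  limsup_le_limsup (Eventually.of_forall (densityRatio_mono h))
    (isBoundedUnder_of ⟨0, densityRatio_nonneg S⟩).isCoboundedUnder_le
    (isBoundedUnder_of ⟨1, densityRatio_le_one S'⟩)

lemma hasDens_zero_of_limsup_nonpos (h : limsup (densityRatio S) atTop ≤ 0) : HasDens S 0 :=
  tendsto_of_le_liminf_of_limsup_le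
    (le_liminf_of_le (isBoundedUnder_of ⟨1, densityRatio_le_one S⟩).isCoboundedUnder_ge
      (Eventually.of_forall (densityRatio_nonneg S)))
    h (isBoundedUnder_of ⟨1, densityRatio_le_one S⟩) (isBoundedUnder_of ⟨0, densityRatio_nonneg S⟩)

lemma HasDens.one_of_subset_union (hB : HasDens B 1) (hN : HasDens N 0) (h : B ⊆ A ∪ N) :
    HasDens A 1 := by
  have hlower : Tendsto (fun T => densityRatio B T - densityRatio N T) atTop (𝓝 1) := by
    rw [hasDens_iff] at hB hN
    simpa using hB.sub hN
  exact tendsto_of_tendsto_of_tendsto_of_le_of_le hlower tendsto_const_nhds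
    (fun T => sub_le_iff_le_add.mpr (densityRatio_le_add h T)) (densityRatio_le_one A)

end densityRatio

lemma thickening_subset_thickening_diff_ball_union_ball {X : Type*} [PseudoMetricSpace X]
    (C : Set X) (q : X) (r ε : ℝ) :
    thickening ε C ⊆ thickening ε (C \ ball q r) ∪ ball q (r + ε) := by
  intro y hy
  obtain ⟨c, hcC, hyc⟩ := mem_thickening_iff.mp hy
  by_cases hcq : c ∈ ball q r
  · right
    rw [mem_ball] at hcq ⊢
    linarith [dist_triangle y c q]
  · exact Or.inl (mem_thickening_iff.mpr ⟨c, ⟨hcC, hcq⟩, hyc⟩)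

section center

variable {X : Type*} [MetricSpace X] {f : ℝ → X → X} {x : X} {C : Set X}

theorem IsCtr.diff_ball (hC : IsCtr f x C) {q : X} {r ε : ℝ} (hε : 0 < ε)
    (h : HasDens {t | f t x ∈ ball q (r + ε)} 0) : IsCtr f x (C \ ball q r) := by
  refine ⟨hC.1.sdiff isOpen_ball, fun δ hδ => ?_⟩
  refine (hC.2 (min δ ε) (lt_min hδ hε)).one_of_subset_union h ?_
  rintro t ⟨ht0, htC⟩
  rcases thickening_subset_thickening_diff_ball_union_ball C q r _ htC with hnear | hball
  · exact Or.inl ⟨ht0, thickening_mono (min_le_left _ _) _ hnear⟩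
  · exact Or.inr (ball_subset_ball (add_le_add_right (min_le_right _ _) _) hball)

theorem IsMCA.limsup_densityRatio_pos (hC : IsMCA f x C) {q : X} (hq : q ∈ C) {U : Set X}
    (hU : U ∈ 𝓝 q) : 0 < limsup (densityRatio {t | f t x ∈ U}) atTop := by
  obtain ⟨r, hr, hrU⟩ := Metric.mem_nhds_iff.mp hU
  by_contra! hlim
  have hball : HasDens {t | f t x ∈ ball q (r / 2 + r / 2)} 0 := by
    rw [add_halves]
    exact hasDens_zero_of_limsup_nonpos
      ((limsup_densityRatio_mono fun t ht => hrU ht).trans hlim)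
  have hdiff := hC.2 _ sdiff_subset (hC.1.diff_ball (half_pos hr) hball)
  exact (hdiff.symm ▸ hq : q ∈ C \ ball q (r / 2)).2 (mem_ball_self (half_pos hr))

end center

theorem center_minus_ball_and_minimal_consequence_general {X : Type*} [MetricSpace X]
    (f : ℝ → X → X) (x : X) (C : Set X) (hC : IsCtr f x C) :
    (∀ q ∈ C, ∀ ε > (0 : ℝ),
      Filter.Tendsto
        (fun T : ℝ =>
          (MeasureTheory.volume {t ∈ Set.Icc 0 T | f t x ∈ Metric.ball q (3 * ε)}).toReal / T)
        Filter.atTop (nhds 0) →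
      IsCtr f x (C \ Metric.ball q (2 * ε))) ∧
    ((∀ C' ⊆ C, IsCtr f x C' → C' = C) →
      ∀ q ∈ C, ∀ U ∈ nhds q,
        0 < Filter.limsup
          (fun T : ℝ => (MeasureTheory.volume {t ∈ Set.Icc 0 T | f t x ∈ U}).toReal / T)
          Filter.atTop) := by
  have hratio : ∀ U : Set X, (fun T : ℝ => (volume {t ∈ Icc 0 T | f t x ∈ U}).toReal / T) =
      densityRatio {t | f t x ∈ U} := fun U => funext fun T => by
    rw [densityRatio, inter_comm]
    rfl
  refine ⟨fun q _ ε hε h => hC.diff_ball hε ?_, fun hmin q hq U hU => ?_⟩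
  · rw [hratio, ← hasDens_iff] at h
    rwa [show 2 * ε + ε = 3 * ε by ring]
  · rw [hratio]
    exact IsMCA.limsup_densityRatio_pos ⟨hC, hmin⟩ hq hU

theorem center_minus_ball_and_minimal_consequence {X : Type*} [MetricSpace X]
    (f : ℝ → X → X) (hf : IsSemiflow f) (x : X) (C : Set X) (hC : IsCtr f x C) :
    (∀ q ∈ C, ∀ ε > (0 : ℝ),
      Filter.Tendsto
        (fun T : ℝ =>
          (MeasureTheory.volume {t ∈ Set.Icc 0 T | f t x ∈ Metric.ball q (3 * ε)}).toReal / T)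
        Filter.atTop (nhds 0) →
      IsCtr f x (C \ Metric.ball q (2 * ε))) ∧
    ((∀ C' ⊆ C, IsCtr f x C' → C' = C) →
      ∀ q ∈ C, ∀ U ∈ nhds q,
        0 < Filter.limsup
          (fun T : ℝ => (MeasureTheory.volume {t ∈ Set.Icc 0 T | f t x ∈ U}).toReal / T)
          Filter.atTop) :=
  center_minus_ball_and_minimal_consequence_general f x C hC
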